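/- arXiv:2008.04539 — 2 statements merged into one kernel-verified Lean document; each statement's English description precedes it below -/
import Mathlib

section
/- In the tree T over alphabet {0,1,B} constructed from a Σ₁-correct approximation (σ_s) of a 1-generic set A <_T 0′, for every level n there exists a level m > n such that among the strings of T at level n, all except one have no splitting extensions above level m in T. -/
/-- Finite binary strings. -/
abbrev BStr := List Bool

/-- The length-`k` initial segment of an infinite sequence, as a finite string. -/
def seg {α : Type} (A : ℕ → α) (k : ℕ) : List α := (List.range k).map A

/-- A Σ⁰₁ (r.e.) set of binary strings. -/
def Sigma01 (V : Set BStr) : Prop :=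
  ∃ f : BStr → ℕ → Bool, Computable₂ f ∧ ∀ σ, σ ∈ V ↔ ∃ n, f σ n = true

/-- A Σ⁰₂ set of binary strings. -/
def Sigma02 (V : Set BStr) : Prop :=
  ∃ f : BStr → ℕ × ℕ → Bool, Computable₂ f ∧ ∀ σ, σ ∈ V ↔ ∃ m, ∀ n, f σ (m, n) = true

/-- `A` meets the set of strings `V`. -/
def Meets (A : ℕ → Bool) (V : Set BStr) : Prop := ∃ k, seg A k ∈ V

/-- `A` avoids the set of strings `V`. -/
def Avoids (A : ℕ → Bool) (V : Set BStr) : Prop := ∃ k, ∀ τ, seg A k <+: τ → τ ∉ V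

/-- `A` is 1-generic. -/
def OneGeneric (A : ℕ → Bool) : Prop := ∀ V, Sigma01 V → Meets A V ∨ Avoids A V

/-- `A` is 2-generic. -/
def TwoGeneric (A : ℕ → Bool) : Prop := ∀ V, Sigma02 V → Meets A V ∨ Avoids A V

/-- A Turing functional: a computable, oracle-use-monotone map from finite oracle
strings to partial values. -/
structure Functional (α β : Type) [Primcodable α] [Primcodable β] where
  φ : List α → ℕ → Option β
  comp : Computable₂ φ
  mono : ∀ {σ τ : List α} {x : ℕ} {b : β}, σ <+: τ → φ σ x = some b → φ τ x = some b

/-- `Φ^A = B` (in particular `Φ^A` is total). -/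
def FunApplies {α β : Type} [Primcodable α] [Primcodable β]
    (Φ : Functional α β) (A : ℕ → α) (B : ℕ → β) : Prop :=
  ∀ x, ∃ k, Φ.φ (seg A k) x = some (B x)

/-- Turing reducibility `B ≤_T A`. -/
def TuringLE {α β : Type} [Primcodable α] [Primcodable β] (B : ℕ → β) (A : ℕ → α) : Prop :=
  ∃ Φ : Functional α β, FunApplies Φ A B

/-- Turing equivalence `B ≡_T A`. -/
def TuringEquiv {α β : Type} [Primcodable α] [Primcodable β] (B : ℕ → β) (A : ℕ → α) : Prop :=
  TuringLE B A ∧ TuringLE A B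

/-- A tree: a set of strings closed under initial segments. -/
def IsTree {α : Type} (T : Set (List α)) : Prop := ∀ σ τ : List α, σ <+: τ → τ ∈ T → σ ∈ T

/-- A recursive tree. -/
def RecTree {α : Type} [Primcodable α] (T : Set (List α)) : Prop :=
  IsTree T ∧ ∃ f : List α → Bool, Computable f ∧ ∀ σ, σ ∈ T ↔ f σ = true

/-- Every string on the tree has a proper extension on the tree. -/
def ExtendibleTree {α : Type} (T : Set (List α)) : Prop :=
  ∀ σ ∈ T, ∃ τ ∈ T, σ <+: τ ∧ σ ≠ τ

/-- The set `[T]` of infinite paths through the tree `T`. -/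
def paths {α : Type} (T : Set (List α)) : Set (ℕ → α) := {X | ∀ k, seg X k ∈ T}

/-- A clopen subset of the path space: a finite union of basic cylinders. -/
def ClopenC {α : Type} (N : Set (ℕ → α)) : Prop :=
  ∃ F : Finset (List α), N = {X | ∃ σ ∈ F, seg X σ.length = σ}

/-- A Π⁰₁ class: the set of paths through a recursive tree. -/
def Pi01C {α : Type} [Primcodable α] (P : Set (ℕ → α)) : Prop := ∃ T, RecTree T ∧ P = paths T

/-- A thin Π⁰₁ class: every Π⁰₁ subclass is the intersection with a clopen set. -/
def ThinPi01 {α : Type} [Primcodable α] (P : Set (ℕ → α)) : Prop :=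
  Pi01C P ∧ ∀ Q, Pi01C Q → Q ⊆ P → ∃ N, ClopenC N ∧ Q = P ∩ N

/-- `A` is of thin-free degree: no set Turing equivalent to `A` belongs to a thin Π⁰₁ class. -/
def ThinFreeDegree (A : ℕ → Bool) : Prop :=
  ∀ B : ℕ → Bool, TuringEquiv B A → ∀ P : Set (ℕ → Bool), ThinPi01 P → B ∉ P

open Classical in
/-- The halting problem `0′`. -/
noncomputable def K : ℕ → Bool := fun n =>
  if (Nat.Partrec.Code.eval (Denumerable.ofNat Nat.Partrec.Code n) n).Dom then true else false

/-- A recursive (limit-lemma) approximation of `A`. -/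
def RecApprox (σs : ℕ → BStr) (A : ℕ → Bool) : Prop :=
  Computable σs ∧ ∀ n, ∃ s0, ∀ s ≥ s0, (σs s).take n = seg A n

/-- `τ` is an initial segment of `A`. -/
def InitSegOf {α : Type} (τ : List α) (A : ℕ → α) : Prop := τ = seg A τ.length

/-- A recursively enumerable set of natural numbers. -/
def REset (S : Set ℕ) : Prop :=
  ∃ f : ℕ → ℕ → Bool, Computable₂ f ∧ ∀ s, s ∈ S ↔ ∃ n, f s n = true

/-- A Σ₁-correct approximation: every infinite r.e. set of stages contains a stage
whose approximating string is a true initial segment of `A`. -/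
def SigmaOneCorrect (σs : ℕ → BStr) (A : ℕ → Bool) : Prop :=
  ∀ S : Set ℕ, REset S → S.Infinite → ∃ s ∈ S, InitSegOf (σs s) A

/-- The three-letter alphabet `{0,1,B}`: `none` is the blank symbol `B`. -/
abbrev Sym3 := Option Bool

/-- Delete all blanks `B` from a string over `{0,1,B}`. -/
def delB (τ : List Sym3) : BStr := τ.filterMap id

/-- The level-marker function `l(s)` of the construction:
`l(0)=0`, `l(1)=|σ_0|+1`, `l(s+2)=l(s+1)+|σ_{s+1}|-|σ_s|`. -/
def lvl (σs : ℕ → BStr) : ℕ → ℕ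
  | 0 => 0
  | 1 => (σs 0).length + 1
  | (s+2) => lvl σs (s+1) + ((σs (s+1)).length - (σs s).length)

/-- The stage during which level `n` of the tree is constructed:
the `s` with `l(s) ≤ n < l(s+1)`. -/
def stg (σs : ℕ → BStr) (n : ℕ) : ℕ :=
  ((List.range (n + 2)).filter (fun s => lvl σs (s + 1) ≤ n)).length

/-- The tree `T ⊆ {0,1,B}^{<ω}` constructed from the approximation `(σ_s)`:
a string `τ` at a level built during stage `s` whose `B`-deleted part is an
initial segment of `σ_s` gets both children `0` and `1`; all other strings are
extended only by the blank `B`. -/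
inductive TreeT (σs : ℕ → BStr) : List Sym3 → Prop
  | nil : TreeT σs []
  | ext (τ : List Sym3) (a : Sym3) : TreeT σs τ →
      (if delB τ <+: σs (stg σs τ.length) then a ≠ none else a = none) →
      TreeT σs (τ ++ [a])

/-!
A splitting node `π` of `T` lies at a level built during stage `stg π.length`, and `delB π` is
an initial segment of `σ` at that stage. Hence if a string `τ` splits above every level, the
computable set of stages `s` with `delB τ ⊑ σ_s` is infinite, and Σ₁-correctness makes
`delB τ` an initial segment of `A`. Two strings of `T` of the same length whose `B`-free parts
are comparable coincide, so at most one string of each level splits above every level; each of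
the finitely many others stops splitting above some level, and `m` is the maximum of these.
-/

open Filter

def SplitsAbove (σs : ℕ → BStr) (τ : List Sym3) (m : ℕ) : Prop :=
  ∃ π : List Sym3, τ <+: π ∧ m ≤ π.length ∧
    TreeT σs (π ++ [some false]) ∧ TreeT σs (π ++ [some true])

section InitSegOf

variable {α : Type} {A : ℕ → α}

lemma seg_take (A : ℕ → α) {j k : ℕ} (h : j ≤ k) : (seg A k).take j = seg A j := by
  rw [seg, seg, ← List.map_take, List.take_range, Nat.min_eq_left h]

lemma seg_prefix_seg (A : ℕ → α) {j k : ℕ} (h : j ≤ k) : seg A j <+: seg A k :=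
  seg_take A h ▸ List.take_prefix j (seg A k)

lemma InitSegOf.of_prefix {c τ : List α} (h : c <+: τ) (hτ : InitSegOf τ A) :
    InitSegOf c A := by
  have hc := List.prefix_iff_eq_take.1 h
  rw [hτ, seg_take A h.length_le] at hc
  exact hc

lemma InitSegOf.prefix_or_prefix {c d : List α} (hc : InitSegOf c A) (hd : InitSegOf d A) :
    c <+: d ∨ d <+: c := by
  rw [hc, hd]
  rcases le_total c.length d.length with h | h
  · exact .inl (seg_prefix_seg A h)
  · exact .inr (seg_prefix_seg A h)

end InitSegOf

section TreeT

variable {σs : ℕ → BStr}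

lemma delB_append (τ ξ : List Sym3) : delB (τ ++ ξ) = delB τ ++ delB ξ :=
  List.filterMap_append

lemma treeT_append_singleton_iff {τ : List Sym3} {a : Sym3} :
    TreeT σs (τ ++ [a]) ↔ TreeT σs τ ∧
      (if delB τ <+: σs (stg σs τ.length) then a ≠ none else a = none) := by
  refine ⟨fun h => ?_, fun h => .ext τ a h.1 h.2⟩
  generalize hξ : τ ++ [a] = ξ at h
  cases h with
  | nil => simp at hξ
  | ext τ' a' h₁ h₂ =>
    obtain ⟨rfl, rfl⟩ := List.append_singleton_inj.1 hξ
    exact ⟨h₁, h₂⟩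

lemma delB_prefix_of_treeT_append_some {π : List Sym3} {b : Bool}
    (h : TreeT σs (π ++ [some b])) : delB π <+: σs (stg σs π.length) := by
  have hcond := (treeT_append_singleton_iff.1 h).2
  by_contra hc
  simp [hc] at hcond

lemma exists_treeT_length_eq (σs : ℕ → BStr) (n : ℕ) :
    ∃ τ : List Sym3, τ.length = n ∧ TreeT σs τ := by
  induction n with
  | zero => exact ⟨[], rfl, .nil⟩
  | succ n ih =>
    obtain ⟨τ, rfl, hτ⟩ := ih
    by_cases hc : delB τ <+: σs (stg σs τ.length)
    · exact ⟨τ ++ [some false], by simp, .ext τ _ hτ (by simp [hc])⟩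
    · exact ⟨τ ++ [none], by simp, .ext τ _ hτ (by simp [hc])⟩

lemma eq_of_treeT_append_singleton {ρ : List Sym3} {a₁ a₂ : Sym3}
    (h₁ : TreeT σs (ρ ++ [a₁])) (h₂ : TreeT σs (ρ ++ [a₂]))
    (hcomp : delB (ρ ++ [a₁]) <+: delB (ρ ++ [a₂]) ∨ delB (ρ ++ [a₂]) <+: delB (ρ ++ [a₁])) :
    a₁ = a₂ := by
  have c₁ := (treeT_append_singleton_iff.1 h₁).2
  have c₂ := (treeT_append_singleton_iff.1 h₂).2
  split_ifs at c₁ c₂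
  · obtain ⟨b₁, rfl⟩ := Option.ne_none_iff_exists'.1 c₁
    obtain ⟨b₂, rfl⟩ := Option.ne_none_iff_exists'.1 c₂
    simpa [delB_append, delB, eq_comm] using hcomp
  · rw [c₁, c₂]

lemma eq_of_treeT_of_delB_prefix_or {τ₁ τ₂ : List Sym3} (hlen : τ₁.length = τ₂.length)
    (h₁ : TreeT σs τ₁) (h₂ : TreeT σs τ₂) (hcomp : delB τ₁ <+: delB τ₂ ∨ delB τ₂ <+: delB τ₁) :
    τ₁ = τ₂ := by
  induction τ₁ using List.reverseRecOn generalizing τ₂ with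
  | nil => exact (List.length_eq_zero_iff.1 hlen.symm).symm
  | append_singleton ρ₁ a₁ ih =>
    obtain ⟨ρ₂, a₂, rfl⟩ : ∃ ρ₂ a₂, τ₂ = ρ₂ ++ [a₂] := by
      rcases τ₂.eq_nil_or_concat with rfl | ⟨ρ₂, a₂, rfl⟩
      · simp at hlen
      · exact ⟨ρ₂, a₂, List.concat_eq_append⟩
    have hρ : ρ₁ = ρ₂ := by
      refine ih (by simpa using hlen) (treeT_append_singleton_iff.1 h₁).1
        (treeT_append_singleton_iff.1 h₂).1 ?_
      have p₁ : delB ρ₁ <+: delB (ρ₁ ++ [a₁]) := (List.prefix_append ρ₁ [a₁]).filterMap id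
      have p₂ : delB ρ₂ <+: delB (ρ₂ ++ [a₂]) := (List.prefix_append ρ₂ [a₂]).filterMap id
      rcases hcomp with h | h
      · exact List.prefix_or_prefix_of_prefix (p₁.trans h) p₂
      · exact List.prefix_or_prefix_of_prefix p₁ (p₂.trans h)
    subst hρ
    rw [eq_of_treeT_append_singleton h₁ h₂ hcomp]

lemma SplitsAbove.mono {τ : List Sym3} {m m' : ℕ} (h : SplitsAbove σs τ m') (hm : m ≤ m') :
    SplitsAbove σs τ m :=
  let ⟨π, hτπ, hπ, h₀, h₁⟩ := h
  ⟨π, hτπ, hm.trans hπ, h₀, h₁⟩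

end TreeT

section Stages

variable {σs : ℕ → BStr} (hinc : ∀ s, (σs s).length < (σs (s + 1)).length)
include hinc

lemma lvl_succ (s : ℕ) : lvl σs (s + 1) = (σs s).length + 1 := by
  induction s with
  | zero => rfl
  | succ s ih =>
    change lvl σs (s + 1) + _ = _
    have := hinc s
    omega

lemma lt_stg {b n : ℕ} (h : (σs b).length < n) : b < stg σs n := by
  have hmono : StrictMono fun s => (σs s).length := strictMono_nat_of_lt_succ hinc
  have hsub : List.range (b + 1) ⊆
      (List.range (n + 2)).filter (fun s => lvl σs (s + 1) ≤ n) := by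
    intro s hs
    have hsb : s ≤ b := Nat.lt_succ_iff.1 (List.mem_range.1 hs)
    have hσsb : (σs s).length ≤ (σs b).length := hmono.monotone hsb
    have hb : b ≤ (σs b).length := hmono.le_apply
    simp only [List.mem_filter, List.mem_range, lvl_succ hinc, decide_eq_true_eq]
    omega
  simpa [stg] using (List.nodup_range.subperm hsub).length_le

lemma infinite_setOf_delB_prefix {τ : List Sym3} (h : ∀ m, SplitsAbove σs τ m) :
    {s | delB τ <+: σs s}.Infinite := by
  refine Set.infinite_of_not_bddAbove fun ⟨b, hb⟩ => ?_
  obtain ⟨π, hτπ, hlen, hsplit, -⟩ := h ((σs b).length + 1)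
  have hb' : b < stg σs π.length := lt_stg hinc (by omega)
  exact hb'.not_ge (hb ((hτπ.filterMap id).trans (delB_prefix_of_treeT_append_some hsplit)))

end Stages

lemma REset.setOf_prefix {σs : ℕ → BStr} (hσ : Computable σs) (c : BStr) :
    REset {s | c <+: σs s} := by
  refine ⟨fun s _ => decide (c = (σs s).take c.length), ?_, fun s => ?_⟩
  · have htake : Primrec fun l : BStr => decide (c = l.take c.length) :=
      (Primrec.eq.comp (Primrec.const c)
        (Primrec.list_take.comp (Primrec.const c.length) Primrec.id)).decide
    exact (htake.to_comp.comp (hσ.comp Computable.fst)).to₂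
  · simp [List.prefix_iff_eq_take]

section Splitting

variable {A : ℕ → Bool} {σs : ℕ → BStr} (hcor : SigmaOneCorrect σs A) (hσ : Computable σs)
  (hinc : ∀ s, (σs s).length < (σs (s + 1)).length)
include hcor hσ hinc

lemma initSegOf_delB_of_forall_splitsAbove {τ : List Sym3} (h : ∀ m, SplitsAbove σs τ m) :
    InitSegOf (delB τ) A := by
  obtain ⟨s, hs, hsA⟩ := hcor _ (REset.setOf_prefix hσ (delB τ)) (infinite_setOf_delB_prefix hinc h)
  exact hsA.of_prefix hs

lemma eq_of_forall_splitsAbove {τ₁ τ₂ : List Sym3} (hlen : τ₁.length = τ₂.length)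
    (h₁ : TreeT σs τ₁) (h₂ : TreeT σs τ₂)
    (hs₁ : ∀ m, SplitsAbove σs τ₁ m) (hs₂ : ∀ m, SplitsAbove σs τ₂ m) : τ₁ = τ₂ :=
  eq_of_treeT_of_delB_prefix_or hlen h₁ h₂
    ((initSegOf_delB_of_forall_splitsAbove hcor hσ hinc hs₁).prefix_or_prefix
      (initSegOf_delB_of_forall_splitsAbove hcor hσ hinc hs₂))

lemma exists_treeT_forall_ne_exists_not_splitsAbove (n : ℕ) :
    ∃ ρ : List Sym3, ρ.length = n ∧ TreeT σs ρ ∧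
      ∀ τ : List Sym3, τ.length = n → TreeT σs τ → τ ≠ ρ → ∃ m, ¬ SplitsAbove σs τ m := by
  by_cases h : ∃ ρ : List Sym3, ρ.length = n ∧ TreeT σs ρ ∧ ∀ m, SplitsAbove σs ρ m
  · obtain ⟨ρ, hρn, hρ, hρs⟩ := h
    refine ⟨ρ, hρn, hρ, fun τ hτn hτ hne => ?_⟩
    by_contra! hτs
    exact hne (eq_of_forall_splitsAbove hcor hσ hinc (hτn.trans hρn.symm) hτ hρ hτs hρs)
  · obtain ⟨ρ, hρn, hρ⟩ := exists_treeT_length_eq σs n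
    refine ⟨ρ, hρn, hρ, fun τ hτn hτ _ => ?_⟩
    by_contra! hτs
    exact h ⟨τ, hτn, hτ, hτs⟩

end Splitting

theorem treeT_splitting_property_general (A : ℕ → Bool) (σs : ℕ → BStr)
    (happ : RecApprox σs A) (hcor : SigmaOneCorrect σs A)
    (hinc : ∀ s, (σs s).length < (σs (s + 1)).length) :
    ∀ n : ℕ, ∃ m > n, ∃ ρ : List Sym3, ρ.length = n ∧ TreeT σs ρ ∧
      ∀ τ : List Sym3, τ.length = n → TreeT σs τ → τ ≠ ρ →
        ¬ ∃ π : List Sym3, τ <+: π ∧ m ≤ π.length ∧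
            TreeT σs (π ++ [some false]) ∧ TreeT σs (π ++ [some true]) := by
  intro n
  obtain ⟨ρ, hρn, hρ, hbounded⟩ :=
    exists_treeT_forall_ne_exists_not_splitsAbove hcor happ.1 hinc n
  set I := {τ : List Sym3 | τ.length = n ∧ TreeT σs τ ∧ τ ≠ ρ}
  have hI : I.Finite := (List.finite_length_eq Sym3 n).subset fun τ hτ => hτ.1
  have hevent : ∀ᶠ m in atTop, ∀ τ ∈ I, ¬ SplitsAbove σs τ m := by
    refine (eventually_all_finite hI).2 fun τ ⟨hτn, hτ, hne⟩ => ?_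
    obtain ⟨m, hm⟩ := hbounded τ hτn hτ hne
    exact eventually_atTop.2 ⟨m, fun m' hm' hs => hm (hs.mono hm')⟩
  obtain ⟨m, hmn, hm⟩ := ((eventually_gt_atTop n).and hevent).exists
  exact ⟨m, hmn, ρ, hρn, hρ, fun τ hτn hτ hne => hm τ ⟨hτn, hτ, hne⟩⟩

/-- in the tree `T` over `{0,1,B}` constructed from the Σ₁-correct
approximation `(σ_s)`, for every level `n` there is a level `m > n` such that all
strings of `T` at level `n` except one have no splittings above level `m`. -/
theorem treeT_splitting_property (A : ℕ → Bool) (σs : ℕ → BStr) (hA : OneGeneric A)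
    (hle : TuringLE A K) (hlt : ¬ TuringLE K A)
    (happ : RecApprox σs A) (hcor : SigmaOneCorrect σs A)
    (hinc : ∀ s, (σs s).length < (σs (s + 1)).length) :
    ∀ n : ℕ, ∃ m > n, ∃ ρ : List Sym3, ρ.length = n ∧ TreeT σs ρ ∧
      ∀ τ : List Sym3, τ.length = n → TreeT σs τ → τ ≠ ρ →
        ¬ ∃ π : List Sym3, τ <+: π ∧ m ≤ π.length ∧
            TreeT σs (π ++ [some false]) ∧ TreeT σs (π ++ [some true]) :=
  treeT_splitting_property_general A σs happ hcor hinc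
end

section
/- If A is 1-generic and (σ_s) is any recursive approximation of A, then for every infinite r.e. set S of stages, the r.e. set of strings V = { σ_s : s ∈ S } is met by A: some σ_s with s ∈ S is an initial segment of A. (A cannot avoid V.) -/
theorem length_seg {α : Type} (A : ℕ → α) (k : ℕ) : (seg A k).length = k := by
  simp [seg]

theorem initSegOf_seg {α : Type} (A : ℕ → α) (k : ℕ) : InitSegOf (seg A k) A := by
  rw [InitSegOf, length_seg]

theorem REset.sigma01_image {S : Set ℕ} (hS : REset S) {σs : ℕ → BStr} (hσs : Computable σs) :
    Sigma01 (σs '' S) := by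
  obtain ⟨g, hg, hgS⟩ := hS
  -- dovetail: the witness `n` codes a stage `n.unpair.1` and an enumeration step `n.unpair.2`
  refine ⟨fun σ n => g n.unpair.1 n.unpair.2 && decide (σs n.unpair.1 = σ), ?_, fun σ => ?_⟩
  · have hstage : Computable fun p : BStr × ℕ => p.2.unpair.1 :=
      Computable.fst.comp (Primrec.unpair.to_comp.comp Computable.snd)
    have hstep : Computable fun p : BStr × ℕ => p.2.unpair.2 :=
      Computable.snd.comp (Primrec.unpair.to_comp.comp Computable.snd)
    exact (Primrec₂.to_comp Primrec.and).comp (hg.comp hstage hstep)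
      (Primrec.eq.decide.to_comp.comp (hσs.comp hstage) Computable.fst)
  · constructor
    · rintro ⟨s, hsS, rfl⟩
      obtain ⟨m, hm⟩ := (hgS s).1 hsS
      exact ⟨Nat.pair s m, by simp [hm]⟩
    · rintro ⟨n, hn⟩
      simp only [Bool.and_eq_true, decide_eq_true_eq] at hn
      exact ⟨n.unpair.1, (hgS _).2 ⟨n.unpair.2, hn.1⟩, hn.2⟩

theorem eventually_seg_prefix {α : Type} {σs : ℕ → List α} {A : ℕ → α}
    (hlim : ∀ n, ∃ s0, ∀ s ≥ s0, (σs s).take n = seg A n) (k : ℕ) :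
    ∃ s0, ∀ s ≥ s0, seg A k <+: σs s := by
  obtain ⟨s0, hs0⟩ := hlim k
  exact ⟨s0, fun s hs => hs0 s hs ▸ List.take_prefix k (σs s)⟩

theorem not_avoids_image {σs : ℕ → BStr} {A : ℕ → Bool}
    (hlim : ∀ n, ∃ s0, ∀ s ≥ s0, (σs s).take n = seg A n) {S : Set ℕ} (hS : S.Infinite) :
    ¬ Avoids A (σs '' S) := by
  rintro ⟨k, hk⟩
  obtain ⟨s0, hs0⟩ := eventually_seg_prefix hlim k
  obtain ⟨s, hsS, hs⟩ := hS.exists_gt s0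
  exact hk (σs s) (hs0 s hs.le) ⟨s, hsS, rfl⟩

/-- if `A` is 1-generic and `(σ_s)` is a recursive approximation of `A`,
then for every infinite r.e. set `S` of stages, some `σ_s` with `s ∈ S` is an initial
segment of `A`. -/
theorem one_generic_meets_approx_set (A : ℕ → Bool) (hA : OneGeneric A)
    (σs : ℕ → BStr) (happ : RecApprox σs A)
    (S : Set ℕ) (hS : REset S) (hSinf : S.Infinite) :
    ∃ s ∈ S, InitSegOf (σs s) A := by
  rcases hA _ (hS.sigma01_image happ.1) with ⟨k, s, hsS, hs⟩ | hAvoids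
  · exact ⟨s, hsS, hs ▸ initSegOf_seg A k⟩
  · exact absurd hAvoids (not_avoids_image happ.2 hSinf)
end
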